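/- Let w ∈ S_{n+1}, let w₀ be the longest permutation in S_{n+1}, and let α be a partition. Then the number of semistandard Young tableaux of shape α' whose column word is a reduced word for w₀ w⁻¹ w₀ equals the number of semistandard skew tableaux of shape the 180-degree rotation of α' whose column word is a reduced word for w. -/

import Mathlib

open scoped Classical

noncomputable section

namespace SchubertQuiver

/-- We model the symmetric group `S_∞` as permutations of `ℕ`, acting on the points
`1, 2, 3, …` (the point `0` is fixed by all permutations we consider). -/
abbrev Perm' := Equiv.Perm ℕ

/-- The simple transposition `s i = (i, i+1)`. -/
def sT (i : ℕ) : Perm' := Equiv.swap i (i + 1)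

/-- The product `s_{e₁} ⋯ s_{e_ℓ}` associated to a word `(e₁, …, e_ℓ)`. -/
def wordProd (l : List ℕ) : Perm' := (l.map sT).prod

/-- The Coxeter length of a permutation: the least length of a word expressing it. -/
def len (w : Perm') : ℕ := sInf {m | ∃ l : List ℕ, wordProd l = w ∧ l.length = m}

/-- `l` is a reduced word for `w`. -/
def IsReducedWord (w : Perm') (l : List ℕ) : Prop := wordProd l = w ∧ l.length = len w

/-- `w ∈ S_N`: the permutation `w` permutes `{1, …, N}` (and fixes everything else). -/
def MemS (N : ℕ) (w : Perm') : Prop := w 0 = 0 ∧ ∀ k, N < k → w k = k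

/-- The longest element of `S_N`, i.e. `i ↦ N + 1 - i` on `{1, …, N}`. -/
def longest (N : ℕ) : Perm' :=
  Function.Involutive.toPerm (fun k => if 1 ≤ k ∧ k ≤ N then N + 1 - k else k)
    (by intro k; dsimp only; split_ifs <;> omega)

/-! ### Single and double Schubert polynomials, as families satisfying the
defining divided-difference recursion. -/

abbrev SPoly := MvPolynomial ℕ ℤ

open MvPolynomial in
/-- `S` is the family of single Schubert polynomials `w ↦ 𝔖_w(X)` (in the variables
`x₁, x₂, …`, where `x_i` is the variable `X i`): it satisfies
`𝔖_{w₀} = x₁^{N-1} ⋯ x_{N-1}` for the longest element `w₀` of each `S_N`, and the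
divided-difference recursion `∂_i 𝔖_{w sᵢ} = 𝔖_w` whenever `ℓ(w sᵢ) = ℓ(w) + 1`,
stated in the division-free form
`(x_i - x_{i+1}) · 𝔖_w = 𝔖_{w sᵢ} - (𝔖_{w sᵢ} with x_i, x_{i+1} exchanged)`. -/
structure IsSchubertFamily (S : Perm' → SPoly) : Prop where
  base : ∀ N : ℕ, S (longest N) = ∏ i ∈ Finset.Icc 1 N, (X i : SPoly) ^ (N - i)
  step : ∀ (w : Perm') (i : ℕ), 1 ≤ i → len (w * sT i) = len w + 1 →
    (X i - X (i + 1)) * S w =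
      S (w * sT i) - rename (Equiv.swap i (i + 1) : ℕ → ℕ) (S (w * sT i))

abbrev DPoly := MvPolynomial (ℕ ⊕ ℕ) ℤ

/-- The variable `x_i`. -/
def xv (i : ℕ) : DPoly := MvPolynomial.X (Sum.inl i)
/-- The variable `y_j`. -/
def yv (j : ℕ) : DPoly := MvPolynomial.X (Sum.inr j)

open MvPolynomial in
/-- `DS` is the family of double Schubert polynomials `w ↦ 𝔖_w(X; Y)`:
`𝔖_{w₀}(X;Y) = ∏_{i+j ≤ N} (x_i - y_j)` for the longest element of each `S_N`, and
the divided-difference recursion (acting on the x-variables) in division-free form. -/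
structure IsDoubleSchubertFamily (DS : Perm' → DPoly) : Prop where
  base : ∀ N : ℕ, DS (longest N) =
    ∏ p ∈ (Finset.Icc 1 N ×ˢ Finset.Icc 1 N).filter (fun p : ℕ × ℕ => p.1 + p.2 ≤ N),
      (xv p.1 - yv p.2)
  step : ∀ (w : Perm') (i : ℕ), 1 ≤ i → len (w * sT i) = len w + 1 →
    (xv i - xv (i + 1)) * DS w =
      DS (w * sT i) -
        rename (Equiv.sumCongr (Equiv.swap i (i + 1)) (Equiv.refl ℕ) : ℕ ⊕ ℕ → ℕ ⊕ ℕ)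
          (DS (w * sT i))

/-! ### Schur determinants -/

variable {A : Type} [CommRing A]

/-- The elements `h_k` determined by
`Σ_k h_k t^k = (1 - d₁ t + d₂ t² - ⋯) / (1 - c₁ t + c₂ t² - ⋯)`.
(The value of `c 0`, `d 0` is ignored; the constant terms of both series are `1`.) -/
def hSeq (c d : ℕ → A) (k : ℕ) : A :=
  PowerSeries.coeff k
    ((PowerSeries.mk fun j => if j = 0 then 1 else (-1) ^ j * d j) *
      PowerSeries.invOfUnit (PowerSeries.mk fun j => if j = 0 then 1 else (-1) ^ j * c j) 1)

/-- `h_k` for an integer index, with `h_k = 0` for `k < 0`. -/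
def hZ (c d : ℕ → A) (k : ℤ) : A := if k < 0 then 0 else hSeq c d k.toNat

/-- The Schur determinant `s_μ(c - d) = det(h_{μ_i + j - i})`, the determinant being of
size the number of (nonzero) rows of `μ`. -/
def schurDet (c d : ℕ → A) (μ : YoungDiagram) : A :=
  Matrix.det (Matrix.of fun i j : Fin (μ.colLen 0) =>
    hZ c d ((μ.rowLen i : ℤ) + (j : ℤ) - (i : ℤ)))

/-! ### Column words of semistandard tableaux

Mathlib's `SemistandardYoungTableau` has entries in `ℕ = {0, 1, 2, …}`; we identify a
tableau with positive entries (as in the paper) with a Mathlib tableau via the shift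
`e ↦ e - 1`.  Thus the letter recorded in the column word of a cell with (Mathlib) entry
`e` is `e + 1`, and "the entries of `T` are at most `m`" becomes `T i j + 1 ≤ m`. -/

/-- The column word of a semistandard Young tableau: the entries of each column are read
from bottom to top, the columns being taken from left to right (entries shifted by `+1`,
see above). -/
def colWord {μ : YoungDiagram} (T : SemistandardYoungTableau μ) : List ℕ :=
  (List.range (μ.rowLen 0)).flatMap fun j =>
    ((List.range (μ.colLen j)).reverse).map fun i => T i j + 1

/-! ### Universal Schubert polynomials -/

/-- The index type for the coefficients `a_{i₁, …, i_n}`: sequences `(i₁, …, i_n)` with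
`0 ≤ i_α ≤ α`; the component at `t : Fin n` is `i_{t+1} ∈ {0, …, t+1}`. -/
abbrev Seqs (n : ℕ) := ∀ t : Fin n, Fin (t.1 + 2)

/-- The elementary symmetric polynomial `e_k(x₁, …, x_j)`. -/
def eP (k j : ℕ) : SPoly :=
  ∑ s ∈ Finset.powersetCard k (Finset.Icc 1 j), ∏ i ∈ s, MvPolynomial.X i

/-- The monomial `c_i(j)` in the polynomial ring on variables indexed by `ℕ × ℕ`
(with the convention `c_0(j) = 1`). -/
def cM (i j : ℕ) : MvPolynomial (ℕ × ℕ) ℤ := if i = 0 then 1 else MvPolynomial.X (i, j)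

/-- `U` is the family of single universal Schubert polynomials (with respect to `n`)
in the abstract variables `c_i(j) = X (i, j)`, `1 ≤ i ≤ j ≤ n`, attached to the single
Schubert family `S`: for `w ∈ S_{n+1}` there are (uniquely determined) integers
`a_{i₁,…,i_n}`, supported on sequences with `Σ i_α = ℓ(w)` and `i_α ≤ α`, with
`𝔖_w(X) = Σ a_{i₁,…,i_n} e_{i₁}(x₁) ⋯ e_{i_n}(x₁,…,x_n)` and
`𝔖_w(c) = Σ a_{i₁,…,i_n} c_{i₁}(1) ⋯ c_{i_n}(n)`. -/
def IsUnivFamily (n : ℕ) (S : Perm' → SPoly) (U : Perm' → MvPolynomial (ℕ × ℕ) ℤ) : Prop :=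
  ∀ w : Perm', MemS (n + 1) w → ∃ a : Seqs n → ℤ,
    (∀ q : Seqs n, a q ≠ 0 → (∑ t : Fin n, ((q t : ℕ))) = len w) ∧
    S w = ∑ q : Seqs n, MvPolynomial.C (a q) * ∏ t : Fin n, eP (q t) (t.1 + 1) ∧
    U w = ∑ q : Seqs n, MvPolynomial.C (a q) * ∏ t : Fin n, cM (q t) (t.1 + 1)

/-- Substitute the alphabet `f` (i.e. `c_i(j) := f i j`) into a universal polynomial. -/
def substA (f : ℕ → ℕ → A) (p : MvPolynomial (ℕ × ℕ) ℤ) : A :=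
  MvPolynomial.aeval (fun ij : ℕ × ℕ => f ij.1 ij.2) p

/-- The double universal Schubert polynomial
`𝔖_w(c; d) = Σ_{u·v=w} (-1)^{ℓ(u)} 𝔖_{u⁻¹}(d) 𝔖_v(c)`, the sum being over all reduced
factorizations `u·v = w`, evaluated on the two alphabets `cA` and `dA`. -/
def dblU (U : Perm' → MvPolynomial (ℕ × ℕ) ℤ) (cA dA : ℕ → ℕ → A) (w : Perm') : A :=
  ∑ᶠ uv : Perm' × Perm',
    if uv.1 * uv.2 = w ∧ len uv.1 + len uv.2 = len w then
      (-1 : A) ^ len uv.1 * substA dA (U uv.1⁻¹) * substA cA (U uv.2)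
    else 0

/-- A semistandard skew tableau: a filling of a finite set of cells (the cells of a skew
diagram) whose rows are weakly increasing and whose columns are strictly increasing,
vanishing outside the cells.  Entries are shifted by `+1` relative to the paper, as for
`SemistandardYoungTableau`. -/
structure SkewTab where
  cells : Finset (ℕ × ℕ)
  entry : ℕ → ℕ → ℕ
  row_weak : ∀ ⦃i j1 j2 : ℕ⦄, j1 < j2 → (i, j1) ∈ cells → (i, j2) ∈ cells →
    entry i j1 ≤ entry i j2
  col_strict : ∀ ⦃i1 i2 j : ℕ⦄, i1 < i2 → (i1, j) ∈ cells → (i2, j) ∈ cells →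
    entry i1 j < entry i2 j
  zeros : ∀ ⦃i j : ℕ⦄, (i, j) ∉ cells → entry i j = 0

/-- The cells of the 180-degree rotation of the Young diagram `α`, taken inside its
minimal bounding rectangle (`a = ` number of rows, `b = ` number of columns):
the cell `(i, j)` belongs to the rotation iff `(a-1-i, b-1-j) ∈ α`. -/
def rotCells (α : YoungDiagram) : Finset (ℕ × ℕ) :=
  (Finset.range (α.colLen 0) ×ˢ Finset.range (α.rowLen 0)).filter
    (fun p => (α.colLen 0 - 1 - p.1, α.rowLen 0 - 1 - p.2) ∈ α)

/-- The column word of a skew tableau: the entries of each column are read from bottom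
to top, the columns being taken from left to right (entries shifted by `+1`). -/
def SkewTab.colWord (T : SkewTab) : List ℕ :=
  (List.range ((T.cells.sup fun p => p.2) + 1)).flatMap fun j =>
    (((List.range ((T.cells.sup fun p => p.1) + 1)).reverse).filter
        (fun i => (i, j) ∈ T.cells)).map fun i => T.entry i j + 1


/-!
Rotating a tableau by 180 degrees and replacing every letter `e` by `n + 1 - e` turns its
column word `l` into `dualWord n l`, the reverse of `l` with complemented letters. Since
`w₀ sₑ w₀ = s_{n+1-e}`, for words with letters in `[1, n]` this operation carries words of `v`
to words of `w₀ v⁻¹ w₀` of the same length, so it matches reduced words of `w₀ w⁻¹ w₀` with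
reduced words of `w`. The letter bound is automatic: the Coxeter length of a permutation is
its number of inversions, so the last letter of a reduced word is a descent, and descents of
an element of `S_{n+1}` lie in `[1, n]`.
-/

lemma sT_apply (i x : ℕ) : sT i x = if x = i then i + 1 else if x = i + 1 then i else x := by
  simp only [sT, Equiv.swap_apply_def]

lemma wordProd_append (l m : List ℕ) : wordProd (l ++ m) = wordProd l * wordProd m := by
  simp [wordProd]

lemma wordProd_append_singleton (l : List ℕ) (e : ℕ) :
    wordProd (l ++ [e]) = wordProd l * sT e := by
  simp [wordProd]

lemma mul_sT_mul_sT (v : Perm') (e : ℕ) : v * sT e * sT e = v := by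
  rw [mul_assoc, sT, Equiv.swap_mul_self, mul_one]

lemma wordProd_reverse (l : List ℕ) : wordProd l.reverse = (wordProd l)⁻¹ := by
  have hinv : (fun x : Perm' => x⁻¹) ∘ sT = sT := funext fun i => Equiv.swap_inv _ _
  rw [wordProd, wordProd, List.prod_inv_reverse, List.map_map, hinv, List.map_reverse]

lemma len_le_length {w : Perm'} {l : List ℕ} (h : wordProd l = w) : len w ≤ l.length :=
  Nat.sInf_le ⟨l, h, rfl⟩

lemma exists_isReducedWord {w : Perm'} {l : List ℕ} (h : wordProd l = w) :
    ∃ m, IsReducedWord w m :=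
  Nat.sInf_mem (⟨l.length, l, h, rfl⟩ : {m | ∃ l, wordProd l = w ∧ l.length = m}.Nonempty)

lemma IsReducedWord.of_append {w : Perm'} {l m : List ℕ} (h : IsReducedWord w (l ++ m)) :
    IsReducedWord (wordProd l) l := by
  refine ⟨rfl, le_antisymm ?_ (len_le_length rfl)⟩
  obtain ⟨l', hl', hlen⟩ := exists_isReducedWord (l := l) rfl
  have hw : len w ≤ (l' ++ m).length :=
    len_le_length (by rw [wordProd_append, hl', ← wordProd_append, h.1])
  have := h.2
  simp only [List.length_append] at hw this
  omega

def FixesFrom (N : ℕ) (v : Perm') : Prop := ∀ k, N ≤ k → v k = k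

namespace FixesFrom

variable {N : ℕ} {u v : Perm'}

lemma apply_lt (h : FixesFrom N v) {k : ℕ} (hk : k < N) : v k < N := by
  by_contra! hge
  have : v k = k := v.injective (h _ hge)
  omega

lemma mono {M : ℕ} (h : FixesFrom N v) (hNM : N ≤ M) : FixesFrom M v :=
  fun k hk => h k (hNM.trans hk)

lemma mul (hu : FixesFrom N u) (hv : FixesFrom N v) : FixesFrom N (u * v) := by
  intro k hk
  rw [Equiv.Perm.mul_apply, hv k hk, hu k hk]

lemma succ_lt_of_apply_succ_lt (h : FixesFrom N v) {e : ℕ} (he : v (e + 1) < v e) :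
    e + 1 < N := by
  by_contra! hN
  have := h (e + 1) hN
  rcases lt_or_ge e N with heN | heN
  · have := h.apply_lt heN
    omega
  · have := h e heN
    omega

end FixesFrom

lemma fixesFrom_sT {N e : ℕ} (h : e + 1 < N) : FixesFrom N (sT e) := by
  intro k hk
  rw [sT_apply]
  split_ifs <;> omega

lemma _root_.Equiv.Perm.eq_one_of_strictMono {v : Equiv.Perm ℕ} (hv : StrictMono v) : v = 1 := by
  have := Subsingleton.elim (hv.orderIsoOfSurjective v v.surjective) (OrderIso.refl ℕ)
  ext k
  exact congrArg (fun f : ℕ ≃o ℕ => f k) this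

def inversions (v : Perm') (N : ℕ) : Finset (ℕ × ℕ) :=
  (Finset.range N ×ˢ Finset.range N).filter fun p => p.1 < p.2 ∧ v p.2 < v p.1

lemma mem_inversions {v : Perm'} {N : ℕ} {p : ℕ × ℕ} :
    p ∈ inversions v N ↔ p.1 < N ∧ p.2 < N ∧ p.1 < p.2 ∧ v p.2 < v p.1 := by
  simp [inversions, and_assoc]

lemma inversions_one (N : ℕ) : inversions 1 N = ∅ := by
  ext p
  simp only [mem_inversions, Equiv.Perm.one_apply, Finset.notMem_empty, iff_false]
  omega

lemma FixesFrom.inversions_eq {N M : ℕ} {v : Perm'} (h : FixesFrom N v) (hNM : N ≤ M) :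
    inversions v M = inversions v N := by
  ext p
  simp only [mem_inversions]
  refine ⟨fun ⟨_, _, hlt, hinv⟩ => ⟨?_, ?_, hlt, hinv⟩,
    fun ⟨_, _, hlt, hinv⟩ => ⟨by omega, by omega, hlt, hinv⟩⟩
  all_goals
    by_contra! hp
    have h2 := h p.2 (by omega)
    rcases lt_or_ge p.1 N with h1 | h1
    · have := h.apply_lt h1
      omega
    · have := h p.1 h1
      omega

/-- Right multiplication by `sT e` exchanges the inversions not involving the pair
`(e, e + 1)`, and toggles that pair. -/
lemma card_inversions_mul_sT {u : Perm'} {e N : ℕ} (hN : e + 1 < N) (h : u e < u (e + 1)) :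
    (inversions (u * sT e) N).card = (inversions u N).card + 1 := by
  have hsT : ∀ x, sT e (sT e x) = x := fun x => Equiv.swap_apply_self _ _ _
  have hmem : (e, e + 1) ∈ inversions (u * sT e) N := by
    rw [mem_inversions]
    refine ⟨by omega, hN, by omega, ?_⟩
    simpa [sT_apply] using h
  rw [← Finset.card_erase_add_one hmem]
  congr 1
  refine Finset.card_nbij' (fun p => (sT e p.1, sT e p.2)) (fun p => (sT e p.1, sT e p.2))
    ?_ ?_ (fun p _ => by simp [hsT]) (fun p _ => by simp [hsT])
  · intro p hp
    simp only [Finset.coe_erase, Set.mem_sdiff, Finset.mem_coe, mem_inversions,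
      Equiv.Perm.mul_apply, Set.mem_singleton_iff, Prod.ext_iff] at hp ⊢
    obtain ⟨⟨h1, h2, h3, h4⟩, hne⟩ := hp
    refine ⟨?_, ?_, ?_, h4⟩ <;> (simp only [sT_apply] at hne ⊢; split_ifs <;> omega)
  · intro p hp
    simp only [Finset.coe_erase, Set.mem_sdiff, Finset.mem_coe, mem_inversions,
      Equiv.Perm.mul_apply, Set.mem_singleton_iff, Prod.ext_iff, hsT] at hp ⊢
    obtain ⟨h1, h2, h3, h4⟩ := hp
    have hp : ¬(p.1 = e ∧ p.2 = e + 1) := by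
      rintro ⟨h1, h2⟩
      rw [h1, h2] at h4
      omega
    refine ⟨⟨?_, ?_, ?_, h4⟩, ?_⟩ <;> (simp only [sT_apply]; split_ifs <;> omega)

lemma card_inversions_wordProd_le {N : ℕ} (l : List ℕ) (hl : ∀ e ∈ l, e + 1 < N) :
    (inversions (wordProd l) N).card ≤ l.length := by
  induction l using List.reverseRecOn with
  | nil => simp [wordProd, inversions_one]
  | append_singleton l e ih =>
    have hN : e + 1 < N := hl e (by simp)
    have ih := ih fun x hx => hl x (by simp [hx])
    rw [wordProd_append_singleton, List.length_append, List.length_singleton]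
    set u := wordProd l
    rcases lt_or_gt_of_ne (u.injective.ne (show e ≠ e + 1 by omega)) with hlt | hgt
    · have := card_inversions_mul_sT hN hlt
      omega
    · have := card_inversions_mul_sT (u := u * sT e) hN (by simpa [sT_apply] using hgt)
      rw [mul_sT_mul_sT] at this
      omega

/-- Removing a descent at a time spells out a word of length the number of inversions. -/
lemma FixesFrom.exists_wordProd_eq {N : ℕ} {v : Perm'} (hv : FixesFrom N v) :
    ∃ l, wordProd l = v ∧ l.length = (inversions v N).card := by
  induction hc : (inversions v N).card using Nat.strong_induction_on generalizing v with
  | _ c ih =>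
  by_cases hdesc : ∃ e, v (e + 1) < v e
  · obtain ⟨e, he⟩ := hdesc
    have hN := hv.succ_lt_of_apply_succ_lt he
    have hcard := card_inversions_mul_sT (u := v * sT e) hN (by simpa [sT_apply] using he)
    rw [mul_sT_mul_sT] at hcard
    obtain ⟨l, hl, hlen⟩ := ih _ (by omega) (hv.mul (fixesFrom_sT hN)) rfl
    refine ⟨l ++ [e], ?_, by simp [hlen]; omega⟩
    rw [wordProd_append_singleton, hl, mul_sT_mul_sT]
  · push Not at hdesc
    obtain rfl : v = 1 := Equiv.Perm.eq_one_of_strictMono <| strictMono_nat_of_lt_succ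
      fun k => (hdesc k).lt_of_ne (v.injective.ne (by omega))
    exact ⟨[], rfl, by simp [← hc, inversions_one]⟩

lemma FixesFrom.len_eq {N : ℕ} {v : Perm'} (hv : FixesFrom N v) :
    len v = (inversions v N).card := by
  obtain ⟨l, hl, hlen⟩ := hv.exists_wordProd_eq
  refine le_antisymm (hlen ▸ len_le_length hl) ?_
  obtain ⟨m, hm, hmlen⟩ := exists_isReducedWord hl
  have hM : ∀ e ∈ m, e + 1 < N + m.sum + 2 := fun e he => by
    have := List.le_sum_of_mem he
    omega
  have := card_inversions_wordProd_le m hM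
  rw [hm, hv.inversions_eq (by omega)] at this
  omega

lemma IsReducedWord.apply_succ_lt {N : ℕ} {v : Perm'} {l : List ℕ} {e : ℕ}
    (hv : FixesFrom N v) (h : IsReducedWord v (l ++ [e])) : v (e + 1) < v e := by
  by_contra! hle
  have hlt : v e < v (e + 1) := hle.lt_of_ne (v.injective.ne (by omega))
  have hv' : FixesFrom (N + e + 2) v := hv.mono (by omega)
  have hl : wordProd l = v * sT e := by
    rw [← h.1, wordProd_append_singleton, mul_sT_mul_sT]
  have hlen := h.of_append.2
  rw [hl] at hlen
  have := card_inversions_mul_sT (by omega : e + 1 < N + e + 2) hlt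
  rw [← hv'.len_eq, ← (hv'.mul (fixesFrom_sT (by omega))).len_eq] at this
  have := h.2
  simp only [List.length_append, List.length_singleton] at this
  omega

namespace MemS

variable {n : ℕ} {u v : Perm'}

lemma fixesFrom (h : MemS (n + 1) v) : FixesFrom (n + 2) v :=
  fun k hk => h.2 k (by omega)

lemma mul {N : ℕ} (hu : MemS N u) (hv : MemS N v) : MemS N (u * v) :=
  ⟨by rw [Equiv.Perm.mul_apply, hv.1, hu.1], fun k hk => by
    rw [Equiv.Perm.mul_apply, hv.2 k hk, hu.2 k hk]⟩

lemma inv {N : ℕ} (hv : MemS N v) : MemS N v⁻¹ :=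
  ⟨v.injective (by simp [hv.1]), fun k hk => v.injective (by simp [hv.2 k hk])⟩

lemma exists_wordProd_eq (hv : MemS (n + 1) v) : ∃ l, wordProd l = v :=
  hv.fixesFrom.exists_wordProd_eq.imp fun _ h => h.1

lemma descent_mem (hv : MemS (n + 1) v) {e : ℕ} (he : v (e + 1) < v e) : 1 ≤ e ∧ e ≤ n := by
  have := hv.fixesFrom.succ_lt_of_apply_succ_lt he
  refine ⟨Nat.one_le_iff_ne_zero.mpr ?_, by omega⟩
  rintro rfl
  rw [hv.1] at he
  omega

end MemS

lemma memS_sT {n e : ℕ} (h1 : 1 ≤ e) (h2 : e ≤ n) : MemS (n + 1) (sT e) :=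
  ⟨by rw [sT_apply, if_neg (by omega), if_neg (by omega)],
    fun k hk => by rw [sT_apply, if_neg (by omega), if_neg (by omega)]⟩

theorem IsReducedWord.letter_mem {n : ℕ} {v : Perm'} {l : List ℕ} (hv : MemS (n + 1) v)
    (h : IsReducedWord v l) : ∀ e ∈ l, 1 ≤ e ∧ e ≤ n := by
  induction l using List.reverseRecOn generalizing v with
  | nil => simp
  | append_singleton l e ih =>
    have he := hv.descent_mem (h.apply_succ_lt hv.fixesFrom)
    have hl : wordProd l = v * sT e := by
      rw [← h.1, wordProd_append_singleton, mul_sT_mul_sT]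
    have ih := ih (hv.mul (memS_sT he.1 he.2)) (hl ▸ h.of_append)
    simpa [or_imp, forall_and, he] using ih

lemma longest_apply (N k : ℕ) :
    longest N k = if 1 ≤ k ∧ k ≤ N then N + 1 - k else k := rfl

lemma longest_mul_self (N : ℕ) : longest N * longest N = 1 := by
  ext k
  simp only [Equiv.Perm.mul_apply, longest_apply, Equiv.Perm.one_apply]
  split_ifs <;> omega

lemma longest_inv (N : ℕ) : (longest N)⁻¹ = longest N :=
  inv_eq_of_mul_eq_one_left (longest_mul_self N)

lemma memS_longest (N : ℕ) : MemS N (longest N) :=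
  ⟨by simp [longest_apply], fun k hk => by rw [longest_apply, if_neg (by omega)]⟩

lemma longest_mul_sT_mul_longest {n e : ℕ} (h1 : 1 ≤ e) (h2 : e ≤ n) :
    longest (n + 1) * sT e * longest (n + 1) = sT (n + 1 - e) := by
  have := Equiv.swap_apply_apply (longest (n + 1)) e (e + 1)
  rw [longest_inv _, longest_apply, longest_apply,
    if_pos (by omega), if_pos (by omega), Equiv.swap_comm,
    show n + 1 + 1 - (e + 1) = n + 1 - e by omega, show n + 1 + 1 - e = n + 1 - e + 1 by omega]
    at this
  rw [sT, ← this, sT]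

def dualWord (n : ℕ) (l : List ℕ) : List ℕ := l.reverse.map (n + 1 - ·)

def dualPerm (n : ℕ) (v : Perm') : Perm' := longest (n + 1) * v⁻¹ * longest (n + 1)

lemma dualPerm_dualPerm (n : ℕ) (v : Perm') : dualPerm n (dualPerm n v) = v := by
  have h := longest_mul_self (n + 1)
  simp only [dualPerm, mul_inv_rev, inv_inv, longest_inv, ← mul_assoc, h, one_mul]
  rw [mul_assoc, h, mul_one]

lemma MemS.dualPerm {n : ℕ} {v : Perm'} (hv : MemS (n + 1) v) : MemS (n + 1) (dualPerm n v) :=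
  ((memS_longest _).mul hv.inv).mul (memS_longest _)

lemma length_dualWord (n : ℕ) (l : List ℕ) : (dualWord n l).length = l.length := by
  simp [dualWord]

lemma forall_mem_dualWord_iff {n : ℕ} {l : List ℕ} :
    (∀ e ∈ dualWord n l, 1 ≤ e ∧ e ≤ n) ↔ ∀ e ∈ l, 1 ≤ e ∧ e ≤ n := by
  simp only [dualWord, List.mem_map, List.mem_reverse, forall_exists_index, and_imp,
    forall_apply_eq_imp_iff₂]
  exact forall₂_congr fun e _ => by omega

lemma dualWord_dualWord {n : ℕ} {l : List ℕ} (h : ∀ e ∈ l, 1 ≤ e ∧ e ≤ n) :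
    dualWord n (dualWord n l) = l := by
  rw [dualWord, dualWord, ← List.map_reverse, List.reverse_reverse, List.map_map]
  refine (List.map_congr_left fun e he => ?_).trans (List.map_id l)
  have := h e he
  simp only [Function.comp_apply, id_eq]
  omega

lemma wordProd_dualWord {n : ℕ} {l : List ℕ} (h : ∀ e ∈ l, 1 ≤ e ∧ e ≤ n) :
    wordProd (dualWord n l) = dualPerm n (wordProd l) := by
  have hconj : (l.reverse.map fun e => sT (n + 1 - e)) =
      l.reverse.map (MulAut.conj (longest (n + 1)) ∘ sT) :=
    List.map_congr_left fun e he => by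
      have := h e (List.mem_reverse.mp he)
      simp [MulAut.conj_apply, longest_inv _,
        longest_mul_sT_mul_longest this.1 this.2]
  calc wordProd (dualWord n l) = (l.reverse.map fun e => sT (n + 1 - e)).prod := by
        simp [wordProd, dualWord, Function.comp_def]
    _ = MulAut.conj (longest (n + 1)) (wordProd l.reverse) := by
        rw [hconj, wordProd, map_list_prod, List.map_map]
    _ = dualPerm n (wordProd l) := by
        rw [wordProd_reverse, MulAut.conj_apply, longest_inv _,
          dualPerm]

lemma IsReducedWord.dualWord {n : ℕ} {v : Perm'} {l : List ℕ} (hv : MemS (n + 1) v)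
    (h : IsReducedWord v l) : IsReducedWord (dualPerm n v) (dualWord n l) := by
  have hl := h.letter_mem hv
  refine ⟨h.1 ▸ wordProd_dualWord hl, le_antisymm ?_ ?_⟩
  · rw [length_dualWord, h.2]
    obtain ⟨m, hm⟩ := hv.dualPerm.exists_wordProd_eq
    obtain ⟨m, hm, hmlen⟩ := exists_isReducedWord hm
    have hred : IsReducedWord (dualPerm n v) m := ⟨hm, hmlen⟩
    have := len_le_length (wordProd_dualWord (hred.letter_mem hv.dualPerm))
    rw [hm, dualPerm_dualPerm, length_dualWord] at this
    omega
  · exact len_le_length (h.1 ▸ wordProd_dualWord hl)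

lemma isReducedWord_dualPerm_iff {n : ℕ} {v : Perm'} {l : List ℕ} (hv : MemS (n + 1) v) :
    IsReducedWord (dualPerm n v) l ↔ IsReducedWord v (dualWord n l) := by
  refine ⟨fun h => dualPerm_dualPerm n v ▸ h.dualWord hv.dualPerm, fun h => ?_⟩
  rw [← dualWord_dualWord (forall_mem_dualWord_iff.mp (h.letter_mem hv))]
  exact h.dualWord hv

lemma _root_.YoungDiagram.lt_of_mem {μ : YoungDiagram} {i j : ℕ} (h : (i, j) ∈ μ) :
    i < μ.colLen 0 ∧ j < μ.rowLen 0 :=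
  ⟨(μ.mem_iff_lt_colLen.mp h).trans_le (μ.colLen_anti _ _ (Nat.zero_le j)),
    (μ.mem_iff_lt_rowLen.mp h).trans_le (μ.rowLen_anti _ _ (Nat.zero_le i))⟩

lemma mem_rotCells {μ : YoungDiagram} {p : ℕ × ℕ} :
    p ∈ rotCells μ ↔ p.1 < μ.colLen 0 ∧ p.2 < μ.rowLen 0 ∧
      (μ.colLen 0 - 1 - p.1, μ.rowLen 0 - 1 - p.2) ∈ μ := by
  simp [rotCells, and_assoc]

lemma rot_mem_rotCells {μ : YoungDiagram} {i j : ℕ} (h : (i, j) ∈ μ) :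
    (μ.colLen 0 - 1 - i, μ.rowLen 0 - 1 - j) ∈ rotCells μ := by
  obtain ⟨hi, hj⟩ := μ.lt_of_mem h
  rw [mem_rotCells]
  refine ⟨by omega, by omega, ?_⟩
  rwa [Nat.sub_sub_self (by omega), Nat.sub_sub_self (by omega)]

lemma SkewTab.ext {U V : SkewTab} (hc : U.cells = V.cells)
    (he : U.entry = V.entry) : U = V := by
  cases U
  cases V
  cases hc
  cases he
  rfl

section Rotation

variable {μ : YoungDiagram} {n : ℕ}

/-- Semistandard tableaux of shape `μ` whose letters `T i j + 1` lie in `[1, n]`. -/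
abbrev BoundedSSYT (μ : YoungDiagram) (n : ℕ) :=
  {T : SemistandardYoungTableau μ // ∀ i j, (i, j) ∈ μ → T i j < n}

abbrev BoundedRotTab (μ : YoungDiagram) (n : ℕ) :=
  {U : SkewTab // U.cells = rotCells μ ∧ ∀ i j, (i, j) ∈ U.cells → U.entry i j < n}

/-- Rotate by 180 degrees and replace every letter `e` by `n + 1 - e`. -/
def BoundedSSYT.rotate (T : BoundedSSYT μ n) : SkewTab where
  cells := rotCells μ
  entry i j :=
    if (i, j) ∈ rotCells μ then n - 1 - T.1 (μ.colLen 0 - 1 - i) (μ.rowLen 0 - 1 - j) else 0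
  row_weak := by
    intro i j1 j2 hj h1 h2
    simp only [if_pos h1, if_pos h2]
    simp only [mem_rotCells] at h1 h2
    exact Nat.sub_le_sub_left (T.1.row_weak (by omega) h1.2.2) _
  col_strict := by
    intro i1 i2 j hi h1 h2
    simp only [if_pos h1, if_pos h2]
    simp only [mem_rotCells] at h1 h2
    have := T.1.col_strict (show μ.colLen 0 - 1 - i2 < μ.colLen 0 - 1 - i1 by omega) h1.2.2
    have := T.2 _ _ h1.2.2
    omega
  zeros := by
    intro i j h
    simp only [if_neg h]

def BoundedRotTab.unrotate (U : BoundedRotTab μ n) : SemistandardYoungTableau μ where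
  entry i j :=
    if (i, j) ∈ μ then n - 1 - U.1.entry (μ.colLen 0 - 1 - i) (μ.rowLen 0 - 1 - j) else 0
  row_weak' := by
    intro i j1 j2 hj h2
    have h1 : (i, j1) ∈ μ := μ.up_left_mem le_rfl hj.le h2
    simp only [if_pos h1, if_pos h2]
    have m1 := U.2.1 ▸ rot_mem_rotCells h1
    have m2 := U.2.1 ▸ rot_mem_rotCells h2
    have := (μ.lt_of_mem h2).2
    have := U.1.row_weak (show μ.rowLen 0 - 1 - j2 < μ.rowLen 0 - 1 - j1 by omega) m2 m1
    omega
  col_strict' := by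
    intro i1 i2 j hi h2
    have h1 : (i1, j) ∈ μ := μ.up_left_mem hi.le le_rfl h2
    simp only [if_pos h1, if_pos h2]
    have m1 := U.2.1 ▸ rot_mem_rotCells h1
    have m2 := U.2.1 ▸ rot_mem_rotCells h2
    have := (μ.lt_of_mem h2).1
    have := U.1.col_strict (show μ.colLen 0 - 1 - i2 < μ.colLen 0 - 1 - i1 by omega) m2 m1
    have := U.2.2 _ _ m1
    omega
  zeros' := by
    intro i j h
    simp only [if_neg h]

lemma BoundedSSYT.rotate_entry_of_mem (T : BoundedSSYT μ n) {i j : ℕ}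
    (h : (i, j) ∈ rotCells μ) :
    T.rotate.entry i j = n - 1 - T.1 (μ.colLen 0 - 1 - i) (μ.rowLen 0 - 1 - j) :=
  if_pos h

lemma BoundedRotTab.unrotate_apply_of_mem (U : BoundedRotTab μ n) {i j : ℕ} (h : (i, j) ∈ μ) :
    U.unrotate i j = n - 1 - U.1.entry (μ.colLen 0 - 1 - i) (μ.rowLen 0 - 1 - j) :=
  if_pos h

def rotateEquiv : BoundedSSYT μ n ≃ BoundedRotTab μ n where
  toFun T := ⟨T.rotate, rfl, fun i j h => by
    rw [T.rotate_entry_of_mem h]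
    have := T.2 _ _ (mem_rotCells.mp h).2.2
    omega⟩
  invFun U := ⟨U.unrotate, fun i j h => by
    rw [U.unrotate_apply_of_mem h]
    have := U.2.2 _ _ (U.2.1 ▸ rot_mem_rotCells h)
    omega⟩
  left_inv T := by
    refine Subtype.ext (SemistandardYoungTableau.ext fun i j => ?_)
    by_cases h : (i, j) ∈ μ
    · obtain ⟨hi, hj⟩ := μ.lt_of_mem h
      have := T.2 i j h
      rw [BoundedRotTab.unrotate_apply_of_mem _ h,
        BoundedSSYT.rotate_entry_of_mem _ (rot_mem_rotCells h),
        Nat.sub_sub_self (n := μ.colLen 0 - 1) (by omega),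
        Nat.sub_sub_self (n := μ.rowLen 0 - 1) (by omega)]
      omega
    · exact (if_neg h).trans (T.1.zeros h).symm
  right_inv U := by
    refine Subtype.ext (SkewTab.ext U.2.1.symm (funext₂ fun i j => ?_))
    by_cases h : (i, j) ∈ rotCells μ
    · obtain ⟨hi, hj, hmem⟩ := mem_rotCells.mp h
      dsimp only at hi hj hmem
      have := U.2.2 i j (by rwa [U.2.1])
      rw [BoundedSSYT.rotate_entry_of_mem _ h, BoundedRotTab.unrotate_apply_of_mem _ hmem,
        Nat.sub_sub_self (n := μ.colLen 0 - 1) (by omega),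
        Nat.sub_sub_self (n := μ.rowLen 0 - 1) (by omega)]
      omega
    · exact (if_neg h).trans (U.1.zeros (by rwa [U.2.1])).symm

end Rotation

lemma _root_.List.reverse_range (a : ℕ) :
    (List.range a).reverse = (List.range a).map (a - 1 - ·) := by
  conv_lhs => rw [List.range_eq_range', List.reverse_range', Nat.zero_add]

lemma _root_.List.flatMap_range_congr {α : Type*} {f : ℕ → List α} {B C : ℕ}
    (hB : ∀ j, B ≤ j → f j = []) (hC : ∀ j, C ≤ j → f j = []) :
    (List.range B).flatMap f = (List.range C).flatMap f := by
  wlog hBC : B ≤ C generalizing B C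
  · exact (this hC hB (le_of_not_ge hBC)).symm
  obtain ⟨d, rfl⟩ := Nat.exists_eq_add_of_le hBC
  suffices h : ((List.range d).map (B + ·)).flatMap f = [] by
    rw [List.range_add, List.flatMap_append, h, List.append_nil]
  simp only [List.flatMap_eq_nil_iff, List.mem_map]
  rintro _ ⟨k, -, rfl⟩
  exact hB _ (Nat.le_add_right _ _)

lemma _root_.List.filter_range_congr {p : ℕ → Bool} {B C : ℕ} (hB : ∀ i, p i → i < B)
    (hC : ∀ i, p i → i < C) : (List.range B).filter p = (List.range C).filter p := by
  wlog hBC : B ≤ C generalizing B C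
  · exact (this hC hB (le_of_not_ge hBC)).symm
  obtain ⟨d, rfl⟩ := Nat.exists_eq_add_of_le hBC
  suffices h : ((List.range d).map (B + ·)).filter p = [] by
    rw [List.range_add, List.filter_append, h, List.append_nil]
  simp only [List.filter_eq_nil_iff, List.mem_map]
  rintro _ ⟨k, -, rfl⟩ hp
  have := hB _ hp
  omega

lemma mem_colWord {μ : YoungDiagram} (T : SemistandardYoungTableau μ) {i j : ℕ}
    (h : (i, j) ∈ μ) : T i j + 1 ∈ colWord T := by
  simp only [colWord, List.mem_flatMap, List.mem_range, List.mem_map, List.mem_reverse]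
  exact ⟨j, (μ.lt_of_mem h).2, i, μ.mem_iff_lt_colLen.mp h, rfl⟩

namespace SkewTab

lemma lt_sup_of_mem (U : SkewTab) {p : ℕ × ℕ} (h : p ∈ U.cells) :
    p.1 < (U.cells.sup fun p => p.1) + 1 ∧ p.2 < (U.cells.sup fun p => p.2) + 1 :=
  ⟨Nat.lt_succ_of_le (Finset.le_sup (f := fun p => p.1) h),
    Nat.lt_succ_of_le (Finset.le_sup (f := fun p => p.2) h)⟩

lemma mem_colWord (U : SkewTab) {i j : ℕ} (h : (i, j) ∈ U.cells) :
    U.entry i j + 1 ∈ U.colWord := by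
  simp only [colWord, List.mem_flatMap, List.mem_range, List.mem_map, List.mem_filter,
    List.mem_reverse, decide_eq_true_eq]
  exact ⟨j, (U.lt_sup_of_mem h).2, i, ⟨(U.lt_sup_of_mem h).1, h⟩, rfl⟩

lemma colWord_eq_of_subset (U : SkewTab) (a b : ℕ)
    (hab : ∀ p ∈ U.cells, p.1 < a ∧ p.2 < b) :
    U.colWord = (List.range b).flatMap fun j =>
      ((List.range a).reverse.filter fun i => (i, j) ∈ U.cells).map fun i => U.entry i j + 1 := by
  have hcol : ∀ j, ((List.range ((U.cells.sup fun p => p.1) + 1)).reverse.filter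
      fun i => (i, j) ∈ U.cells) = (List.range a).reverse.filter fun i => (i, j) ∈ U.cells := by
    intro j
    simp only [List.filter_reverse]
    rw [List.filter_range_congr (C := a)]
    · simpa using fun i h => (U.lt_sup_of_mem h).1
    · simpa using fun i h => (hab _ h).1
  simp only [colWord, hcol]
  refine List.flatMap_range_congr (fun j hj => ?_) (fun j hj => ?_) <;>
    simp only [List.map_eq_nil_iff, List.filter_eq_nil_iff, decide_eq_true_eq] <;>
    intro i _ h
  · have := (U.lt_sup_of_mem h).2
    omega
  · have := (hab _ h).2
    omega

end SkewTab

lemma filter_mem_rotCells {μ : YoungDiagram} {j : ℕ} (hj : j < μ.rowLen 0) :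
    ((List.range (μ.colLen 0)).reverse.filter fun i => (i, j) ∈ rotCells μ) =
      (List.range (μ.colLen (μ.rowLen 0 - 1 - j))).map (μ.colLen 0 - 1 - ·) := by
  set c := μ.colLen (μ.rowLen 0 - 1 - j)
  have hc : c ≤ μ.colLen 0 := μ.colLen_anti _ _ (Nat.zero_le _)
  rw [List.reverse_range, List.filter_map, List.filter_congr (q := fun i => i < c),
    List.filter_range_congr (C := c), List.filter_eq_self.mpr]
  · simp
  · simp only [decide_eq_true_eq]
    omega
  · simp
  · intro i hi
    rw [List.mem_range] at hi
    simp only [Function.comp_apply, mem_rotCells, decide_eq_decide]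
    rw [Nat.sub_sub_self (n := μ.colLen 0 - 1) (by omega), μ.mem_iff_lt_colLen]
    omega

lemma colWord_rotate {μ : YoungDiagram} {n : ℕ} (T : BoundedSSYT μ n) :
    T.rotate.colWord = dualWord n (colWord T.1) := by
  rw [T.rotate.colWord_eq_of_subset (μ.colLen 0) (μ.rowLen 0)
      fun p hp => (mem_rotCells.mp hp).imp_right And.left,
    dualWord, colWord, List.reverse_flatMap, List.map_flatMap, List.reverse_range (μ.rowLen 0),
    List.flatMap_map]
  refine List.flatMap_congr fun j hj => ?_
  rw [List.mem_range] at hj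
  rw [show T.rotate.cells = rotCells μ from rfl, filter_mem_rotCells hj]
  simp only [Function.comp_apply, List.map_reverse, List.reverse_reverse, List.map_map]
  refine List.map_congr_left fun t ht => ?_
  have hmem : (t, μ.rowLen 0 - 1 - j) ∈ μ := μ.mem_iff_lt_colLen.mpr (List.mem_range.mp ht)
  have hrot := rot_mem_rotCells hmem
  rw [Nat.sub_sub_self (n := μ.rowLen 0 - 1) (by omega)] at hrot
  have := T.2 _ _ hmem
  have := (μ.lt_of_mem hmem).1
  simp only [Function.comp_apply]
  rw [T.rotate_entry_of_mem hrot, Nat.sub_sub_self (n := μ.colLen 0 - 1) (by omega)]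
  omega

def reducedRotateEquiv {n : ℕ} {w : Perm'} (hw : MemS (n + 1) w) (μ : YoungDiagram) :
    {T : SemistandardYoungTableau μ // IsReducedWord (dualPerm n w) (colWord T)} ≃
      {U : SkewTab // U.cells = rotCells μ ∧ IsReducedWord w U.colWord} :=
  have hT : ∀ {T : SemistandardYoungTableau μ}, IsReducedWord (dualPerm n w) (colWord T) →
      ∀ i j, (i, j) ∈ μ → T i j < n := fun h i j hij => by
    have := h.letter_mem hw.dualPerm _ (mem_colWord _ hij)
    omega
  have hU : ∀ {U : SkewTab}, U.cells = rotCells μ ∧ IsReducedWord w U.colWord →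
      U.cells = rotCells μ ∧ ∀ i j, (i, j) ∈ U.cells → U.entry i j < n := fun h =>
    ⟨h.1, fun i j hij => by
      have := h.2.letter_mem hw _ (SkewTab.mem_colWord _ hij)
      omega⟩
  (Equiv.subtypeSubtypeEquivSubtype hT).symm.trans <|
    (rotateEquiv.subtypeEquiv fun T => by
      rw [isReducedWord_dualPerm_iff hw, ← colWord_rotate]
      rfl).trans <|
    (Equiv.subtypeEquivRight fun U => ⟨fun h => ⟨U.2.1, h⟩, And.right⟩).trans <|
    Equiv.subtypeSubtypeEquivSubtype hU

/-- For `w ∈ S_{n+1}` and a partition `α`, the number of semistandard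
Young tableaux of shape `α'` whose column word is a reduced word for `w₀ w⁻¹ w₀` equals
the number of semistandard skew tableaux of shape the 180-degree rotation of `α'` whose
column word is a reduced word for `w`. -/
theorem statement9 (n : ℕ) (w : Perm') (hw : MemS (n + 1) w) (α : YoungDiagram) :
    Nat.card {T : SemistandardYoungTableau α.transpose //
        IsReducedWord (longest (n + 1) * w⁻¹ * longest (n + 1)) (colWord T)} =
      Nat.card {U : SkewTab //
        U.cells = rotCells α.transpose ∧ IsReducedWord w U.colWord} :=
  Nat.card_congr (reducedRotateEquiv hw α.transpose)

end SchubertQuiver
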